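/- arXiv:1710.09962 — 3 statements merged into one kernel-verified Lean document; each statement's English description precedes it below -/
import Mathlib

section
/- Let M ∈ ℕ with M ≥ 1, let c_1, …, c_M be positive reals, and let a > 0. Consider the quantity Q(σ, ρ) = Σ_{i=1}^M c_i² σ_i² + Σ_{i≠j} ρ_{ij} c_i c_j σ_i σ_j over all nonnegative reals σ_1, …, σ_M with Σ_i σ_i² = a² and all reals ρ_{ij} ∈ [−1, 1] (for i ≠ j, with ρ_{ij} = ρ_{ji}). Then the maximum of Q equals a² · Σ_{j=1}^M c_j², and it is attained by taking ρ_{ij} = 1 for all i ≠ j and σ_i = c_i a / √(Σ_{j=1}^M c_j²) for each i. -/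
/-!
Since every correlation is at most `1` and every product `c i c j σ i σ j` is nonnegative,
`Q(σ, ρ) ≤ Q(σ, 1) = (∑ c i σ i)²`, and Cauchy–Schwarz bounds this by
`(∑ c i²)(∑ σ i²) = a² ∑ c i²`. Both steps are equalities for `ρ = 1` and `σ`
proportional to `c`.
-/
open Finset

section BiasPower

variable {ι : Type*} [Fintype ι]

lemma sum_sq_div_sqrt_sum_sq {c : ι → ℝ} (hc : 0 < ∑ j, c j ^ 2) (a : ℝ) :
    ∑ i, (c i * a / √(∑ j, c j ^ 2)) ^ 2 = a ^ 2 := by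
  simp_rw [div_pow, mul_pow, Real.sq_sqrt hc.le, ← sum_div, ← sum_mul]
  field_simp

lemma sum_mul_div_sqrt_sum_sq {c : ι → ℝ} (hc : 0 < ∑ j, c j ^ 2) (a : ℝ) :
    ∑ i, c i * (c i * a / √(∑ j, c j ^ 2)) = a * √(∑ j, c j ^ 2) := by
  simp_rw [← mul_div_assoc, ← mul_assoc, ← sq, ← sum_div, ← sum_mul]
  rw [div_eq_iff (Real.sqrt_pos.mpr hc).ne', mul_assoc, Real.mul_self_sqrt hc.le, mul_comm]

variable [DecidableEq ι]

lemma sq_sum_eq_sum_sq_add_sum_erase_mul {R : Type*} [CommSemiring R] (f : ι → R) :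
    (∑ i, f i) ^ 2 = ∑ i, f i ^ 2 + ∑ i, ∑ j ∈ univ.erase i, f i * f j := by
  rw [sq, sum_mul_sum, ← sum_add_distrib]
  refine sum_congr rfl fun i _ => ?_
  rw [← add_sum_erase _ _ (mem_univ i), sq]

def biasPower (c σ : ι → ℝ) (ρ : ι → ι → ℝ) : ℝ :=
  ∑ i, c i ^ 2 * σ i ^ 2 + ∑ i, ∑ j ∈ univ.erase i, ρ i j * (c i * c j * (σ i * σ j))

lemma biasPower_one (c σ : ι → ℝ) :
    biasPower c σ (fun _ _ => 1) = (∑ i, c i * σ i) ^ 2 := by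
  simp only [biasPower, sq_sum_eq_sum_sq_add_sum_erase_mul, one_mul, mul_pow]
  congr 1
  refine sum_congr rfl fun i _ => sum_congr rfl fun j _ => by ring

lemma biasPower_le_biasPower_one {c σ : ι → ℝ} {ρ : ι → ι → ℝ}
    (hcσ : ∀ i, 0 ≤ c i * σ i) (hρ : ∀ i j, i ≠ j → ρ i j ≤ 1) :
    biasPower c σ ρ ≤ biasPower c σ (fun _ _ => 1) := by
  refine add_le_add_right (sum_le_sum fun i _ => sum_le_sum fun j hj => ?_) _
  have hprod : 0 ≤ c i * c j * (σ i * σ j) := by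
    simpa only [mul_mul_mul_comm] using mul_nonneg (hcσ i) (hcσ j)
  exact mul_le_mul_of_nonneg_right (hρ i j (ne_of_mem_erase hj).symm) hprod

lemma biasPower_le {c σ : ι → ℝ} {ρ : ι → ι → ℝ}
    (hcσ : ∀ i, 0 ≤ c i * σ i) (hρ : ∀ i j, i ≠ j → ρ i j ≤ 1) :
    biasPower c σ ρ ≤ (∑ i, σ i ^ 2) * ∑ i, c i ^ 2 :=
  calc biasPower c σ ρ ≤ (∑ i, c i * σ i) ^ 2 :=
        (biasPower_le_biasPower_one hcσ hρ).trans_eq (biasPower_one c σ)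
    _ ≤ (∑ i, c i ^ 2) * ∑ i, σ i ^ 2 := sum_mul_sq_le_sq_mul_sq _ c σ
    _ = (∑ i, σ i ^ 2) * ∑ i, c i ^ 2 := mul_comm _ _

lemma biasPower_one_div_sqrt_sum_sq {c : ι → ℝ} (hc : 0 < ∑ j, c j ^ 2) (a : ℝ) :
    biasPower c (fun i => c i * a / √(∑ j, c j ^ 2)) (fun _ _ => 1)
      = a ^ 2 * ∑ j, c j ^ 2 := by
  rw [biasPower_one, sum_mul_div_sqrt_sum_sq hc, mul_pow, Real.sq_sqrt hc.le]

end BiasPower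

/-- Theorem 1: the equivalent injected bias power
`Q(σ, ρ) = ∑ i, (c i)² (σ i)² + ∑_{i ≠ j} ρ i j * c i * c j * σ i * σ j`,
maximized over nonnegative `σ` with `∑ i, (σ i)² = a²` and symmetric correlation
coefficients `ρ i j ∈ [-1, 1]`, equals `a² * ∑ j, (c j)²`, attained by taking all
`ρ i j = 1` and `σ i = c i * a / √(∑ j, (c j)²)`. -/
theorem stmt5 (M : ℕ) (hM : 1 ≤ M) (c : Fin M → ℝ) (hc : ∀ i, 0 < c i)
    (a : ℝ) (ha : 0 < a) :
    IsGreatest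
        {q : ℝ | ∃ (σ : Fin M → ℝ) (ρ : Fin M → Fin M → ℝ),
          (∀ i, 0 ≤ σ i) ∧ (∑ i, (σ i) ^ 2 = a ^ 2) ∧
          (∀ i j, i ≠ j → -1 ≤ ρ i j ∧ ρ i j ≤ 1) ∧
          (∀ i j, ρ i j = ρ j i) ∧
          q = ∑ i, (c i) ^ 2 * (σ i) ^ 2
              + ∑ i, ∑ j ∈ Finset.univ.erase i, ρ i j * (c i * c j * (σ i * σ j))}
        (a ^ 2 * ∑ j, (c j) ^ 2)
      ∧
    (∑ i, (c i) ^ 2 * (c i * a / Real.sqrt (∑ j, (c j) ^ 2)) ^ 2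
        + ∑ i, ∑ j ∈ Finset.univ.erase i,
            (1 : ℝ) * (c i * c j * ((c i * a / Real.sqrt (∑ j', (c j') ^ 2))
              * (c j * a / Real.sqrt (∑ j', (c j') ^ 2))))
      = a ^ 2 * ∑ j, (c j) ^ 2) := by
  have : Nonempty (Fin M) := Fin.pos_iff_nonempty.mp hM
  have hS : 0 < ∑ j, c j ^ 2 := sum_pos (fun i _ => pow_pos (hc i) 2) univ_nonempty
  have hval := biasPower_one_div_sqrt_sum_sq hS a
  have hσ₀ : ∀ i, 0 ≤ c i * a / √(∑ j, c j ^ 2) := fun i =>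
    div_nonneg (mul_nonneg (hc i).le ha.le) (Real.sqrt_nonneg _)
  refine ⟨⟨⟨_, fun _ _ => 1, hσ₀, sum_sq_div_sqrt_sum_sq hS a,
    fun _ _ _ => by norm_num, fun _ _ => rfl, hval.symm⟩, ?_⟩, hval⟩
  rintro q ⟨σ, ρ, hσ, hσa, hρ, -, rfl⟩
  calc biasPower c σ ρ ≤ (∑ i, σ i ^ 2) * ∑ i, c i ^ 2 :=
        biasPower_le (fun i => mul_nonneg (hc i).le (hσ i)) fun i j h => (hρ i j h).2
    _ = a ^ 2 * ∑ j, c j ^ 2 := by rw [hσa]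
end

section
/- Let T > 0, β_1 ≥ 0, β_2 ≥ 0, and α_1, α_2 ∈ ℝ with α_1 + α_2 > 0. Define A = √((β_2 − β_1 T²)²/4 + T²(α_1 + α_2)²), φ = arctan((β_2 − β_1 T²) / (2T(α_1 + α_2))), f(θ) = β_1 T² sin²θ + β_2 cos²θ + 2T(α_1 + α_2) sinθ cosθ, and θ* = π/4 − φ/2. Then θ* ∈ (0, π/2), and for every θ ∈ [0, π/2], f(θ) ≤ f(θ*) = (β_1 T² + β_2)/2 + A. -/
open Real

/-!
In the double angle, `f θ = (β₁T² + β₂)/2 + c cos 2θ + s sin 2θ` with `c = (β₂ − β₁T²)/2` and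
`s = T(α₁ + α₂) > 0`. A harmonic `c cos x + s sin x` is bounded by its amplitude `√(c² + s²) = A`
(Cauchy–Schwarz), and this bound is attained at `x = π/2 − φ`, where `φ = arctan (c / s)` is the
angle with `sin φ = c / A` and `cos φ = s / A`. Since `2θ* = π/2 − φ` and `φ ∈ (−π/2, π/2)`,
`θ*` lies in `(0, π/2)`.
-/

theorem mul_cos_add_mul_sin_le_sqrt (a b x : ℝ) : a * cos x + b * sin x ≤ √(a ^ 2 + b ^ 2) := by
  have cauchy_schwarz : (a * cos x + b * sin x) ^ 2 ≤ a ^ 2 + b ^ 2 := by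
    nlinarith [sq_nonneg (a * sin x - b * cos x), sin_sq_add_cos_sq x]
  exact (le_abs_self _).trans (abs_le_sqrt cauchy_schwarz)

theorem sqrt_one_add_div_sq {a b : ℝ} (hb : 0 < b) : √(1 + (a / b) ^ 2) = √(a ^ 2 + b ^ 2) / b := by
  rw [show 1 + (a / b) ^ 2 = (a ^ 2 + b ^ 2) / b ^ 2 by field_simp; ring,
    sqrt_div' _ (sq_nonneg b), sqrt_sq hb.le]

theorem sin_arctan_div {a b : ℝ} (hb : 0 < b) : sin (arctan (a / b)) = a / √(a ^ 2 + b ^ 2) := by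
  rw [sin_arctan, sqrt_one_add_div_sq hb]
  field_simp

theorem cos_arctan_div {a b : ℝ} (hb : 0 < b) : cos (arctan (a / b)) = b / √(a ^ 2 + b ^ 2) := by
  rw [cos_arctan, sqrt_one_add_div_sq hb, one_div_div]

theorem mul_cos_add_mul_sin_pi_div_two_sub_arctan {a b : ℝ} (hb : 0 < b) :
    a * cos (π / 2 - arctan (a / b)) + b * sin (π / 2 - arctan (a / b)) = √(a ^ 2 + b ^ 2) := by
  rw [cos_pi_div_two_sub, sin_pi_div_two_sub, sin_arctan_div hb, cos_arctan_div hb]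
  field_simp
  rw [sq_sqrt (by positivity)]

theorem quadratic_form_sin_cos_eq_double_angle (p q r θ : ℝ) :
    p * sin θ ^ 2 + q * cos θ ^ 2 + 2 * r * sin θ * cos θ
      = (p + q) / 2 + (q - p) / 2 * cos (2 * θ) + r * sin (2 * θ) := by
  rw [sin_two_mul, cos_two_mul, sin_sq]
  ring

theorem stmt7_general (T β₁ β₂ α₁ α₂ : ℝ) (hT : 0 < T)
    (hα : 0 < α₁ + α₂)
    (A φ : ℝ) (f : ℝ → ℝ) (θs : ℝ)
    (hA : A = Real.sqrt ((β₂ - β₁ * T ^ 2) ^ 2 / 4 + T ^ 2 * (α₁ + α₂) ^ 2))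
    (hφ : φ = Real.arctan ((β₂ - β₁ * T ^ 2) / (2 * T * (α₁ + α₂))))
    (hf : ∀ θ, f θ = β₁ * T ^ 2 * Real.sin θ ^ 2 + β₂ * Real.cos θ ^ 2
            + 2 * T * (α₁ + α₂) * Real.sin θ * Real.cos θ)
    (hθs : θs = Real.pi / 4 - φ / 2) :
    θs ∈ Set.Ioo 0 (Real.pi / 2) ∧
      (∀ θ ∈ Set.Icc 0 (Real.pi / 2), f θ ≤ f θs) ∧
      f θs = (β₁ * T ^ 2 + β₂) / 2 + A := by
  set c := (β₂ - β₁ * T ^ 2) / 2 with hc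
  set s := T * (α₁ + α₂) with hs_def
  have hs : 0 < s := mul_pos hT hα
  have hA' : A = √(c ^ 2 + s ^ 2) := by rw [hA, hc, hs_def]; ring_nf
  have hφ' : φ = arctan (c / s) := by rw [hφ, hc, hs_def]; congr 1; field_simp
  have hf' (θ : ℝ) : f θ = (β₁ * T ^ 2 + β₂) / 2 + (c * cos (2 * θ) + s * sin (2 * θ)) := by
    rw [hf, mul_assoc 2 T, quadratic_form_sin_cos_eq_double_angle]
    ring
  have h2θs : 2 * θs = π / 2 - arctan (c / s) := by rw [hθs, hφ']; ring
  have hmax : f θs = (β₁ * T ^ 2 + β₂) / 2 + A := by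
    rw [hf', h2θs, mul_cos_add_mul_sin_pi_div_two_sub_arctan hs, hA']
  refine ⟨?_, fun θ _ ↦ ?_, hmax⟩
  · have := neg_pi_div_two_lt_arctan (c / s)
    have := arctan_lt_pi_div_two (c / s)
    constructor <;> linarith
  · rw [hmax, hf', hA']
    gcongr
    exact mul_cos_add_mul_sin_le_sqrt c s (2 * θ)

/-- Theorem 2: with `f θ = β₁ T² sin²θ + β₂ cos²θ + 2T(α₁+α₂) sinθ cosθ`,
`A = √((β₂ − β₁T²)²/4 + T²(α₁+α₂)²)`, `φ = arctan((β₂ − β₁T²)/(2T(α₁+α₂)))`, and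
`θ* = π/4 − φ/2`, we have `θ* ∈ (0, π/2)` and `f` attains its maximum
`(β₁T² + β₂)/2 + A` over `[0, π/2]` at `θ*`. -/
theorem stmt7 (T β₁ β₂ α₁ α₂ : ℝ) (hT : 0 < T) (hβ₁ : 0 ≤ β₁) (hβ₂ : 0 ≤ β₂)
    (hα : 0 < α₁ + α₂)
    (A φ : ℝ) (f : ℝ → ℝ) (θs : ℝ)
    (hA : A = Real.sqrt ((β₂ - β₁ * T ^ 2) ^ 2 / 4 + T ^ 2 * (α₁ + α₂) ^ 2))
    (hφ : φ = Real.arctan ((β₂ - β₁ * T ^ 2) / (2 * T * (α₁ + α₂))))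
    (hf : ∀ θ, f θ = β₁ * T ^ 2 * Real.sin θ ^ 2 + β₂ * Real.cos θ ^ 2
            + 2 * T * (α₁ + α₂) * Real.sin θ * Real.cos θ)
    (hθs : θs = Real.pi / 4 - φ / 2) :
    θs ∈ Set.Ioo 0 (Real.pi / 2) ∧
      (∀ θ ∈ Set.Icc 0 (Real.pi / 2), f θ ≤ f θs) ∧
      f θs = (β₁ * T ^ 2 + β₂) / 2 + A :=
  stmt7_general T β₁ β₂ α₁ α₂ hT hα A φ f θs hA hφ hf hθs
end

section
/- Let n ∈ ℕ with n ≥ 1, let ξ_1, …, ξ_n be positive reals, and let a > 0. Then there exists a unique λ > 0 such that Σ_{i=1}^n max(1/λ − 1/ξ_i, 0) = a². -/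
/-! Substituting `t = 1/λ` turns the left-hand side into the water-filling function
`t ↦ ∑ i, max (t - 1/ξ i) 0`: it is continuous, vanishes for `t ≤ min_i 1/ξ i`, grows at least
like `n t - ∑ i, 1/ξ i`, and is strictly increasing wherever it is positive. The intermediate value
theorem gives a level `t` with value `a²`, strict monotonicity makes it unique, and `t > 0`
because some `1/ξ i < t`. -/

open Finset

noncomputable def waterFill {ι : Type*} [Fintype ι] (c : ι → ℝ) (t : ℝ) : ℝ :=
  ∑ i, max (t - c i) 0

namespace waterFill

variable {ι : Type*} [Fintype ι] (c : ι → ℝ)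

theorem continuous : Continuous (waterFill c) := by
  unfold waterFill
  fun_prop

theorem eq_zero_of_le {t : ℝ} (ht : ∀ i, t ≤ c i) : waterFill c t = 0 :=
  sum_eq_zero fun i _ => max_eq_right (sub_nonpos.mpr (ht i))

theorem card_mul_sub_sum_le (t : ℝ) : Fintype.card ι * t - ∑ i, c i ≤ waterFill c t :=
  calc Fintype.card ι * t - ∑ i, c i = ∑ i, (t - c i) := by
        rw [sum_sub_distrib, sum_const, card_univ, nsmul_eq_mul]
    _ ≤ waterFill c t := sum_le_sum fun i _ => le_max_left _ _

theorem exists_lt_of_pos {t : ℝ} (ht : 0 < waterFill c t) : ∃ i, c i < t := by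
  obtain ⟨i, -, hi⟩ := exists_lt_of_sum_lt (s := univ) (f := fun _ => (0 : ℝ))
    (g := fun i => max (t - c i) 0) (by rw [sum_const_zero]; exact ht)
  exact ⟨i, sub_pos.mp (lt_max_iff.mp hi |>.resolve_right (lt_irrefl 0))⟩

theorem strictMonoOn : StrictMonoOn (waterFill c) {t | 0 < waterFill c t} := by
  intro s _ t ht hst
  obtain ⟨j, hj⟩ := exists_lt_of_pos c ht
  refine sum_lt_sum (fun i _ => max_le_max_right 0 (by linarith)) ⟨j, mem_univ j, ?_⟩
  exact (max_lt (by linarith) (sub_pos.mpr hj)).trans_le (le_max_left _ _)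

theorem existsUnique_eq [Nonempty ι] {b : ℝ} (hb : 0 < b) : ∃! t, waterFill c t = b := by
  set t₀ := univ.inf' univ_nonempty c
  set t₁ := max t₀ ((b + ∑ i, c i) / Fintype.card ι)
  have hcard : (0 : ℝ) < Fintype.card ι := Nat.cast_pos.mpr Fintype.card_pos
  have h₀ : waterFill c t₀ = 0 := eq_zero_of_le c fun i => inf'_le c (mem_univ i)
  have h₁ : b ≤ waterFill c t₁ :=
    calc b = Fintype.card ι * ((b + ∑ i, c i) / Fintype.card ι) - ∑ i, c i := by
          field_simp; ring
      _ ≤ Fintype.card ι * t₁ - ∑ i, c i := by gcongr; exact le_max_right _ _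
      _ ≤ waterFill c t₁ := card_mul_sub_sum_le c t₁
  obtain ⟨t, -, ht⟩ := intermediate_value_Icc (le_max_left t₀ _) (continuous c).continuousOn
    (show b ∈ Set.Icc (waterFill c t₀) (waterFill c t₁) from ⟨h₀ ▸ hb.le, h₁⟩)
  refine ⟨t, ht, fun s hs => (strictMonoOn c).injOn ?_ ?_ (hs.trans ht.symm)⟩ <;>
    simp only [Set.mem_ofPred_eq, hs, ht, hb]

end waterFill

/-- Existence and uniqueness of the water level `λ` in the water-filling solution:
for positive `ξ₁, …, ξₙ` and `a > 0`, there is a unique `λ > 0` with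
`∑ i, max (1/λ - 1/ξ i) 0 = a²`. -/
theorem stmt11 (n : ℕ) (hn : 1 ≤ n) (ξ : Fin n → ℝ) (hξ : ∀ i, 0 < ξ i)
    (a : ℝ) (ha : 0 < a) :
    ∃! l : ℝ, 0 < l ∧ ∑ i, max (1 / l - 1 / ξ i) 0 = a ^ 2 := by
  have : Nonempty (Fin n) := ⟨⟨0, hn⟩⟩
  have ha2 : 0 < a ^ 2 := by positivity
  obtain ⟨t, ht, ht_unique⟩ := waterFill.existsUnique_eq (fun i => 1 / ξ i) ha2
  have ht_pos : 0 < t := by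
    obtain ⟨i, hi⟩ := waterFill.exists_lt_of_pos _ (ht ▸ ha2)
    exact (one_div_pos.mpr (hξ i)).trans hi
  refine ⟨1 / t, ⟨one_div_pos.mpr ht_pos, by rw [one_div_one_div]; exact ht⟩, ?_⟩
  rintro l ⟨-, hl⟩
  rw [← ht_unique (1 / l) hl, one_div_one_div]
end
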